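/- arXiv:1602.07398 — 2 statements merged into one kernel-verified Lean document; each statement's English description precedes it below -/
import Mathlib

section
/- If v₀, v₁ satisfy the full steady-state mean BVP of the neurotransmitter model (the ODE system together with all four boundary conditions v₀'(0) = 0, v₁'(0) = 0, v₀(L) = 0, v₁'(L) = c·β/(α+β)), then for every x ∈ [0, L] one has v₀(x) + v₁(x) = (c·β/(α·γ))·cosh(γL)/sinh(γL). In particular the constant value of the steady-state mean concentration is (c·β/(α·γ))·coth(γL). -/
/-!
Adding the two equations gives `(v₀ + v₁)'' = 0`, so by `v₀'(0) + v₁'(0) = 0` the mean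
`v₀ + v₁` is constant and equals `v₁(L)`. The difference `u = β v₀ - α v₁` solves
`u'' = γ² u` with `u'(0) = 0`, so the Wronskian of `u` against `cosh (γ x)`,
`u' cosh (γ x) - γ u sinh (γ x)`, vanishes identically. At `x = L` this is a linear equation
for `v₁(L)`, because `v₀(L) = 0` and `v₀'(L) = -v₁'(L)` are known there.
-/

open Set Real

theorem eq_of_hasDerivAt_zero_on_Icc {f : ℝ → ℝ} {a b : ℝ}
    (hf : ∀ x ∈ Icc a b, HasDerivAt f 0 x) : ∀ x ∈ Icc a b, f x = f a :=
  constant_of_has_deriv_right_zero (fun x hx => (hf x hx).continuousAt.continuousWithinAt)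
    fun x hx => (hf x (Ico_subset_Icc_self hx)).hasDerivWithinAt

theorem ContDiffOn.hasDerivAt_deriv {f : ℝ → ℝ} {s : Set ℝ} {n : WithTop ℕ∞}
    (hf : ContDiffOn ℝ n f s) (hs : IsOpen s) (hn : n ≠ 0) {x : ℝ} (hx : x ∈ s) :
    HasDerivAt f (deriv f x) x :=
  ((hf.differentiableOn hn).differentiableAt (hs.mem_nhds hx)).hasDerivAt

theorem ContDiffOn.hasDerivAt_deriv_deriv {f : ℝ → ℝ} {s : Set ℝ}
    (hf : ContDiffOn ℝ 2 f s) (hs : IsOpen s) {x : ℝ} (hx : x ∈ s) :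
    HasDerivAt (deriv f) (deriv (deriv f) x) x :=
  (hf.deriv_of_isOpen hs (m := 1) (by norm_num)).hasDerivAt_deriv hs one_ne_zero hx

theorem wronskian_cosh_eq_of_hasDerivAt {u u' : ℝ → ℝ} {γ a b : ℝ}
    (hu : ∀ x ∈ Icc a b, HasDerivAt u (u' x) x)
    (hu' : ∀ x ∈ Icc a b, HasDerivAt u' (γ ^ 2 * u x) x) :
    ∀ x ∈ Icc a b, u' x * cosh (γ * x) - γ * u x * sinh (γ * x)
      = u' a * cosh (γ * a) - γ * u a * sinh (γ * a) := by
  refine eq_of_hasDerivAt_zero_on_Icc fun x hx => ?_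
  have hlin : HasDerivAt (fun y => γ * y) γ x := by simpa using (hasDerivAt_id x).const_mul γ
  exact (((hu' x hx).mul hlin.cosh).sub (((hu x hx).const_mul γ).mul hlin.sinh)).congr_deriv
    (by ring)

section SteadyState

variable {D α β L : ℝ} {v₀ v₁ v₀' v₁' v₀'' v₁'' : ℝ → ℝ}
  (hv₀ : ∀ x ∈ Icc 0 L, HasDerivAt v₀ (v₀' x) x) (hv₁ : ∀ x ∈ Icc 0 L, HasDerivAt v₁ (v₁' x) x)
  (hv₀' : ∀ x ∈ Icc 0 L, HasDerivAt v₀' (v₀'' x) x)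
  (hv₁' : ∀ x ∈ Icc 0 L, HasDerivAt v₁' (v₁'' x) x)
  (hode₀ : ∀ x ∈ Icc 0 L, D * v₀'' x = β * v₀ x - α * v₁ x)
  (hode₁ : ∀ x ∈ Icc 0 L, D * v₁'' x = α * v₁ x - β * v₀ x)
include hv₀' hv₁' hode₀ hode₁

theorem steadyState_deriv_add_eq_zero (hD : D ≠ 0) (h₀ : v₀' 0 + v₁' 0 = 0) :
    ∀ x ∈ Icc 0 L, v₀' x + v₁' x = 0 := by
  have hsum : ∀ x ∈ Icc 0 L, HasDerivAt (v₀' + v₁') 0 x := fun x hx => by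
    have hD_sum : D * (v₀'' x + v₁'' x) = 0 := by linear_combination hode₀ x hx + hode₁ x hx
    exact ((hv₀' x hx).add (hv₁' x hx)).congr_deriv ((mul_eq_zero.mp hD_sum).resolve_left hD)
  intro x hx
  simpa [h₀] using eq_of_hasDerivAt_zero_on_Icc hsum x hx

include hv₀ hv₁

theorem steadyState_add_eq (hD : D ≠ 0) (h₀ : v₀' 0 + v₁' 0 = 0) :
    ∀ x ∈ Icc 0 L, v₀ x + v₁ x = v₀ 0 + v₁ 0 := by
  have hderiv := steadyState_deriv_add_eq_zero hv₀' hv₁' hode₀ hode₁ hD h₀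
  have hsum : ∀ x ∈ Icc 0 L, HasDerivAt (v₀ + v₁) 0 x := fun x hx =>
    ((hv₀ x hx).add (hv₁ x hx)).congr_deriv (hderiv x hx)
  exact eq_of_hasDerivAt_zero_on_Icc hsum

theorem steadyState_wronskian_eq {γ : ℝ} (hD : D ≠ 0) (hγ : D * γ ^ 2 = α + β) :
    ∀ x ∈ Icc 0 L, (β * v₀' x - α * v₁' x) * cosh (γ * x)
        - γ * (β * v₀ x - α * v₁ x) * sinh (γ * x) = β * v₀' 0 - α * v₁' 0 := by
  have hu : ∀ x ∈ Icc 0 L, HasDerivAt (fun y => β * v₀ y - α * v₁ y) (β * v₀' x - α * v₁' x) x :=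
    fun x hx => ((hv₀ x hx).const_mul β).sub ((hv₁ x hx).const_mul α)
  have hu' : ∀ x ∈ Icc 0 L, HasDerivAt (fun y => β * v₀' y - α * v₁' y)
      (γ ^ 2 * (β * v₀ x - α * v₁ x)) x := fun x hx => by
    refine (((hv₀' x hx).const_mul β).sub ((hv₁' x hx).const_mul α)).congr_deriv ?_
    refine mul_left_cancel₀ hD ?_
    linear_combination β * hode₀ x hx - α * hode₁ x hx - (β * v₀ x - α * v₁ x) * hγ
  intro x hx
  simpa using wronskian_cosh_eq_of_hasDerivAt hu hu' x hx

theorem steadyState_add_eq_of_boundary {γ q : ℝ} (hD : D ≠ 0) (hα : α ≠ 0) (hαβ : α + β ≠ 0)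
    (hγ : D * γ ^ 2 = α + β) (hsinh : sinh (γ * L) ≠ 0) (hL : 0 ≤ L)
    (hbc₀ : v₀' 0 = 0) (hbc₁ : v₁' 0 = 0) (hbc₂ : v₀ L = 0) (hbc₃ : v₁' L = q / (α + β)) :
    ∀ x ∈ Icc 0 L, v₀ x + v₁ x = q / (α * γ) * cosh (γ * L) / sinh (γ * L) := by
  have hγ₀ : γ ≠ 0 := by rintro rfl; simp at hsinh
  have hL_mem : L ∈ Icc 0 L := right_mem_Icc.2 hL
  have h₀ : v₀' 0 + v₁' 0 = 0 := by rw [hbc₀, hbc₁, add_zero]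
  have hv₀'L : v₀' L = -v₁' L := eq_neg_of_add_eq_zero_left
    (steadyState_deriv_add_eq_zero hv₀' hv₁' hode₀ hode₁ hD h₀ L hL_mem)
  have hW := steadyState_wronskian_eq hv₀ hv₁ hv₀' hv₁' hode₀ hode₁ hD hγ L hL_mem
  have hflux : β * -(q / (α + β)) - α * (q / (α + β)) = -q := by field_simp; ring
  rw [hv₀'L, hbc₃, hflux, hbc₂, hbc₀, hbc₁] at hW
  intro x hx
  rw [steadyState_add_eq hv₀ hv₁ hv₀' hv₁' hode₀ hode₁ hD h₀ x hx,
    ← steadyState_add_eq hv₀ hv₁ hv₀' hv₁' hode₀ hode₁ hD h₀ L hL_mem, hbc₂, zero_add]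
  field_simp
  linear_combination hW

end SteadyState

theorem neurotransmitter_mean_constant_value_general
    (L D α β c γ : ℝ) (hL : 0 < L) (hD : 0 < D) (hα : 0 < α) (hβ : 0 < β)
    (hγ : γ = Real.sqrt ((α + β) / D))
    (v₀ v₁ : ℝ → ℝ) (a b : ℝ) (ha : a < 0) (hb : L < b)
    (hreg0 : ContDiffOn ℝ 2 v₀ (Set.Ioo a b))
    (hreg1 : ContDiffOn ℝ 2 v₁ (Set.Ioo a b))
    (hode0 : ∀ x ∈ Set.Icc (0:ℝ) L, D * deriv (deriv v₀) x = β * v₀ x - α * v₁ x)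
    (hode1 : ∀ x ∈ Set.Icc (0:ℝ) L, D * deriv (deriv v₁) x = α * v₁ x - β * v₀ x)
    (hbc0 : deriv v₀ 0 = 0) (hbc1 : deriv v₁ 0 = 0)
    (hbc2 : v₀ L = 0) (hbc3 : deriv v₁ L = c * β / (α + β)) :
    ∀ x ∈ Set.Icc (0:ℝ) L,
      v₀ x + v₁ x = (c * β / (α * γ)) * Real.cosh (γ * L) / Real.sinh (γ * L) := by
  have hαβ : 0 < α + β := add_pos hα hβ
  have hγ_pos : 0 < γ := hγ ▸ sqrt_pos.2 (div_pos hαβ hD)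
  have hγ_sq : D * γ ^ 2 = α + β := by
    rw [hγ, sq_sqrt (div_pos hαβ hD).le, mul_div_cancel₀ _ hD.ne']
  have hsub : Icc 0 L ⊆ Ioo a b := Icc_subset_Ioo ha hb
  exact steadyState_add_eq_of_boundary
    (fun x hx => hreg0.hasDerivAt_deriv isOpen_Ioo two_ne_zero (hsub hx))
    (fun x hx => hreg1.hasDerivAt_deriv isOpen_Ioo two_ne_zero (hsub hx))
    (fun x hx => hreg0.hasDerivAt_deriv_deriv isOpen_Ioo (hsub hx))
    (fun x hx => hreg1.hasDerivAt_deriv_deriv isOpen_Ioo (hsub hx))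
    hode0 hode1 hD.ne' hα.ne' hαβ.ne' hγ_sq (sinh_pos_iff.2 (mul_pos hγ_pos hL)).ne' hL.le
    hbc0 hbc1 hbc2 hbc3

/-- For the full steady-state mean BVP of the neurotransmitter model,
`v₀ + v₁` equals the constant `(c·β/(α·γ))·cosh(γL)/sinh(γL)` on `[0, L]`. -/
theorem neurotransmitter_mean_constant_value
    (L D α β c γ : ℝ) (hL : 0 < L) (hD : 0 < D) (hα : 0 < α) (hβ : 0 < β) (hc : 0 < c)
    (hγ : γ = Real.sqrt ((α + β) / D))
    (v₀ v₁ : ℝ → ℝ) (a b : ℝ) (ha : a < 0) (hb : L < b)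
    (hreg0 : ContDiffOn ℝ 2 v₀ (Set.Ioo a b))
    (hreg1 : ContDiffOn ℝ 2 v₁ (Set.Ioo a b))
    (hode0 : ∀ x ∈ Set.Icc (0:ℝ) L, D * deriv (deriv v₀) x = β * v₀ x - α * v₁ x)
    (hode1 : ∀ x ∈ Set.Icc (0:ℝ) L, D * deriv (deriv v₁) x = α * v₁ x - β * v₀ x)
    (hbc0 : deriv v₀ 0 = 0) (hbc1 : deriv v₁ 0 = 0)
    (hbc2 : v₀ L = 0) (hbc3 : deriv v₁ L = c * β / (α + β)) :
    ∀ x ∈ Set.Icc (0:ℝ) L,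
      v₀ x + v₁ x = (c * β / (α * γ)) * Real.cosh (γ * L) / Real.sinh (γ * L) :=
  neurotransmitter_mean_constant_value_general L D α β c γ hL hD hα hβ hγ v₀ v₁ a b ha hb hreg0
    hreg1 hode0 hode1 hbc0 hbc1 hbc2 hbc3
end

section
/- If v₀, v₁ satisfy the full steady-state mean BVP of the insect-respiration model (the ODE system together with all four boundary conditions v₀(0) = 0, v₁(0) = 0, v₁'(L) = 0, v₀(L) = c·α/(α+β)), then for every x ∈ [0, L] one has v₀(x) + v₁(x) = m·x, where m = ρ·c/(ρ·L + (1−ρ)·tanh(γL)/γ). In particular the steady-state mean oxygen flux to the tissue at x = 0, namely D·(v₀'(0) + v₁'(0)), equals D·m. -/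
/-!
The sum `s = v₀ + v₁` satisfies `s'' = 0`, so with `s(0) = 0` it is `k·x` for the constant flux
`k = s'(0)`. The combination `u = α v₁ - β v₀` satisfies `u'' = γ² u` with `u(0) = 0`, so its
Wronskian with `sinh (γ x)` vanishes identically: `u' sinh (γ x) = γ u cosh (γ x)`. At `x = L` the
boundary conditions give `u'(L) = -β k` and `u(L) = α k L - c α`, a linear equation for `k` whose
solution is `m`.
-/

open Set Real

section Calculus

variable {E : Type*} [NormedAddCommGroup E] [NormedSpace ℝ E]

theorem eq_left_of_hasDerivAt_zero {f : ℝ → E} {a b : ℝ}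
    (hf : ∀ x ∈ Icc a b, HasDerivAt f 0 x) : ∀ x ∈ Icc a b, f x = f a :=
  constant_of_has_deriv_right_zero (fun x hx => (hf x hx).continuousAt.continuousWithinAt)
    fun x hx => (hf x (Ico_subset_Icc_self hx)).hasDerivWithinAt

theorem eq_add_smul_of_hasDerivAt_const {f : ℝ → E} {a b : ℝ} {k : E}
    (hf : ∀ x ∈ Icc a b, HasDerivAt f k x) : ∀ x ∈ Icc a b, f x = f a + (x - a) • k := by
  have hg : ∀ x ∈ Icc a b, HasDerivAt (fun y => f y - (y - a) • k) 0 x := fun x hx =>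
    ((hf x hx).sub (((hasDerivAt_id x).sub_const a).smul_const k)).congr_deriv (by simp)
  intro x hx
  simpa [sub_eq_iff_eq_add] using eq_left_of_hasDerivAt_zero hg x hx

theorem ContDiffOn.hasDerivAt_and_hasDerivAt_deriv {𝕜 F : Type*} [NontriviallyNormedField 𝕜]
    [NormedAddCommGroup F] [NormedSpace 𝕜 F] {f : 𝕜 → F} {U : Set 𝕜} (hf : ContDiffOn 𝕜 2 f U)
    (hU : IsOpen U) {x : 𝕜} (hx : x ∈ U) :
    HasDerivAt f (deriv f x) x ∧ HasDerivAt (deriv f) (deriv (deriv f) x) x :=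
  ⟨((hf.differentiableOn two_ne_zero).differentiableAt (hU.mem_nhds hx)).hasDerivAt,
    (((hf.deriv_of_isOpen hU (m := 1) (by norm_num)).differentiableOn one_ne_zero).differentiableAt
      (hU.mem_nhds hx)).hasDerivAt⟩

end Calculus

theorem mul_sinh_eq_mul_cosh_of_hasDerivAt_sq_mul {u u' : ℝ → ℝ} {γ L : ℝ}
    (hu : ∀ x ∈ Icc 0 L, HasDerivAt u (u' x) x)
    (hu' : ∀ x ∈ Icc 0 L, HasDerivAt u' (γ ^ 2 * u x) x) (hu0 : u 0 = 0) :
    ∀ x ∈ Icc 0 L, u' x * sinh (γ * x) = γ * u x * cosh (γ * x) := by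
  have hW : ∀ x ∈ Icc 0 L,
      HasDerivAt (fun y => u' y * sinh (γ * y) - γ * u y * cosh (γ * y)) 0 x := fun x hx => by
    have hsinh := ((hasDerivAt_id x).const_mul γ).sinh
    have hcosh := ((hasDerivAt_id x).const_mul γ).cosh
    exact (((hu' x hx).mul hsinh).sub (((hu x hx).const_mul γ).mul hcosh)).congr_deriv (by ring)
  intro x hx
  simpa [hu0, sub_eq_zero] using eq_left_of_hasDerivAt_zero hW x hx

theorem slope_eq_of_sinh_cosh_relation {L α β c γ k : ℝ} (hL : 0 < L) (hα : 0 < α) (hβ : 0 < β)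
    (hγ : 0 < γ) (h : -(β * k) * sinh (γ * L) = γ * (α * k * L - c * α) * cosh (γ * L)) :
    k = α / (α + β) * c / (α / (α + β) * L + (1 - α / (α + β)) * tanh (γ * L) / γ) := by
  have hT : 0 < tanh (γ * L) := by
    rw [tanh_eq_sinh_div_cosh]; exact div_pos (sinh_pos_iff.2 (by positivity)) (cosh_pos _)
  have hkT : k * (β * tanh (γ * L) + γ * α * L) = γ * c * α := by
    rw [tanh_eq_sinh_div_cosh]
    field_simp [(cosh_pos (γ * L)).ne']
    linear_combination -h
  have hβρ : 1 - α / (α + β) = β / (α + β) := by field_simp; ring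
  generalize tanh (γ * L) = T at hT hkT ⊢
  rw [hβρ, eq_div_iff (by positivity)]
  field_simp
  linear_combination hkT

theorem insect_mean_sum_value_and_flux_general
    (L D α β c ρ γ m : ℝ) (hL : 0 < L) (hD : 0 < D) (hα : 0 < α) (hβ : 0 < β)
    (hρ : ρ = α / (α + β)) (hγ : γ = Real.sqrt ((α + β) / D))
    (hm : m = ρ * c / (ρ * L + (1 - ρ) * Real.tanh (γ * L) / γ))
    (v₀ v₁ : ℝ → ℝ) (a b : ℝ) (ha : a < 0) (hb : L < b)
    (hreg0 : ContDiffOn ℝ 2 v₀ (Set.Ioo a b))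
    (hreg1 : ContDiffOn ℝ 2 v₁ (Set.Ioo a b))
    (hode0 : ∀ x ∈ Set.Icc (0:ℝ) L, D * deriv (deriv v₀) x = β * v₀ x - α * v₁ x)
    (hode1 : ∀ x ∈ Set.Icc (0:ℝ) L, D * deriv (deriv v₁) x = α * v₁ x - β * v₀ x)
    (hbc0 : v₀ 0 = 0) (hbc1 : v₁ 0 = 0)
    (hbc2 : deriv v₁ L = 0) (hbc3 : v₀ L = c * α / (α + β)) :
    (∀ x ∈ Set.Icc (0:ℝ) L, v₀ x + v₁ x = m * x) ∧
    D * (deriv v₀ 0 + deriv v₁ 0) = D * m := by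
  have hU : Icc 0 L ⊆ Ioo a b := Icc_subset_Ioo ha hb
  have hv₀ := fun x (hx : x ∈ Icc 0 L) => hreg0.hasDerivAt_and_hasDerivAt_deriv isOpen_Ioo (hU hx)
  have hv₁ := fun x (hx : x ∈ Icc 0 L) => hreg1.hasDerivAt_and_hasDerivAt_deriv isOpen_Ioo (hU hx)
  set k := deriv v₀ 0 + deriv v₁ 0
  have hflux : ∀ x ∈ Icc 0 L, deriv v₀ x + deriv v₁ x = k :=
    eq_left_of_hasDerivAt_zero fun x hx => ((hv₀ x hx).2.add (hv₁ x hx).2).congr_deriv <|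
      mul_left_cancel₀ hD.ne' (by linear_combination hode0 x hx + hode1 x hx)
  have hsum : ∀ x ∈ Icc 0 L, v₀ x + v₁ x = k * x := fun x hx => by
    simpa [hbc0, hbc1, mul_comm] using eq_add_smul_of_hasDerivAt_const
      (fun y hy => ((hv₀ y hy).1.add (hv₁ y hy).1).congr_deriv (hflux y hy)) x hx
  have hγsq : γ ^ 2 * D = α + β := by
    rw [hγ, sq_sqrt (by positivity), div_mul_cancel₀ _ hD.ne']
  have hLmem : L ∈ Icc 0 L := right_mem_Icc.2 hL.le
  have hW := mul_sinh_eq_mul_cosh_of_hasDerivAt_sq_mul (γ := γ)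
    (u := fun y => α * v₁ y - β * v₀ y) (u' := fun y => α * deriv v₁ y - β * deriv v₀ y)
    (fun x hx => ((hv₁ x hx).1.const_mul α).sub ((hv₀ x hx).1.const_mul β))
    (fun x hx => (((hv₁ x hx).2.const_mul α).sub ((hv₀ x hx).2.const_mul β)).congr_deriv <|
      mul_left_cancel₀ hD.ne' <| by
        linear_combination α * hode1 x hx - β * hode0 x hx - (α * v₁ x - β * v₀ x) * hγsq)
    (by simp [hbc0, hbc1]) L hLmem
  have hu'L : α * deriv v₁ L - β * deriv v₀ L = -(β * k) := by
    linear_combination (α + β) * hbc2 - β * hflux L hLmem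
  have huL : α * v₁ L - β * v₀ L = α * k * L - c * α := by
    have hcα : (α + β) * (c * α / (α + β)) = c * α := mul_div_cancel₀ _ (by positivity)
    linear_combination α * hsum L hLmem - (α + β) * hbc3 - hcα
  rw [hu'L, huL] at hW
  have hk : k = m := by
    subst hρ hm
    exact slope_eq_of_sinh_cosh_relation hL hα hβ (hγ ▸ sqrt_pos.2 (by positivity)) hW
  exact ⟨fun x hx => hk ▸ hsum x hx, by rw [hk]⟩

/-- For the full steady-state mean BVP of the insect-respiration model,
`v₀ + v₁ = m·x` on `[0, L]` and the mean oxygen flux at `x = 0` equals `D·m`. -/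
theorem insect_mean_sum_value_and_flux
    (L D α β c ρ γ m : ℝ) (hL : 0 < L) (hD : 0 < D) (hα : 0 < α) (hβ : 0 < β) (hc : 0 < c)
    (hρ : ρ = α / (α + β)) (hγ : γ = Real.sqrt ((α + β) / D))
    (hm : m = ρ * c / (ρ * L + (1 - ρ) * Real.tanh (γ * L) / γ))
    (v₀ v₁ : ℝ → ℝ) (a b : ℝ) (ha : a < 0) (hb : L < b)
    (hreg0 : ContDiffOn ℝ 2 v₀ (Set.Ioo a b))
    (hreg1 : ContDiffOn ℝ 2 v₁ (Set.Ioo a b))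
    (hode0 : ∀ x ∈ Set.Icc (0:ℝ) L, D * deriv (deriv v₀) x = β * v₀ x - α * v₁ x)
    (hode1 : ∀ x ∈ Set.Icc (0:ℝ) L, D * deriv (deriv v₁) x = α * v₁ x - β * v₀ x)
    (hbc0 : v₀ 0 = 0) (hbc1 : v₁ 0 = 0)
    (hbc2 : deriv v₁ L = 0) (hbc3 : v₀ L = c * α / (α + β)) :
    (∀ x ∈ Set.Icc (0:ℝ) L, v₀ x + v₁ x = m * x) ∧
    D * (deriv v₀ 0 + deriv v₁ 0) = D * m :=
  insect_mean_sum_value_and_flux_general L D α β c ρ γ m hL hD hα hβ hρ hγ hm v₀ v₁ a b ha hb hreg0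
    hreg1 hode0 hode1 hbc0 hbc1 hbc2 hbc3
end
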